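/- arXiv:math/9806106 — 2 statements merged into one kernel-verified Lean document; each statement's English description precedes it below -/
import Mathlib

section
/- Every finite subset of the space D can be isometrically embedded at infinity into the hyperbolic plane; that is, D is an asymptotic subcone of the hyperbolic plane. -/
open Set Filter

noncomputable section

/-- The space `D`: real functions on `[0, ρ)` with `f 0 = 0`, vanishing except
at finitely many points (the function is recorded on all of `ℝ`, vanishing
outside `[0, ρ)`). -/
structure Dp where
  ρ : ℝ
  toFun : ℝ → ℝ
  ρ_nonneg : 0 ≤ ρ
  zero_at_zero : toFun 0 = 0
  supp_subset : ∀ t, t ∉ Set.Ico 0 ρ → toFun t = 0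
  finite_supp : {t | toFun t ≠ 0}.Finite

/-- The moment of segregation of two elements of `D`. -/
noncomputable def segD (f1 f2 : Dp) : ℝ :=
  sSup {t | t ≤ min f1.ρ f2.ρ ∧ ∀ t' ∈ Set.Ico (0:ℝ) t, f1.toFun t' = f2.toFun t'}

/-- The metric on `D`: `d_D(f1, f2) = (ρ1 - s) + (ρ2 - s)`. -/
noncomputable def dD (f1 f2 : Dp) : ℝ := (f1.ρ - segD f1 f2) + (f2.ρ - segD f1 f2)

/-!
`D` is an `ℝ`-tree: two of its elements share the trunk `[0, s)` up to their segregation moment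
`s` and then branch apart, and truncation moves along a branch, which gives the geodesics.
At scale `m → ∞`, send `f` to the point `∑ f(t) e^{-tm} + i e^{-ρm}` of the upper half-plane.
Below `s` the terms of two such points cancel, so their Euclidean distance is `e^{-sm}(c + o(1))`
with `c ≠ 0`, while their heights are `e^{-ρ₁m}` and `e^{-ρ₂m}`. The hyperbolic distance
`2 arsinh (|z - w| / 2√(im z im w))` is therefore `(ρ₁ + ρ₂ - 2s) m + O(1)`.
-/

open Real Topology

theorem tendsto_exp_mul_smul_finsum {E : Type*} [NormedAddCommGroup E] [NormedSpace ℝ E]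
    {c : ℝ → E} (hc : (Function.support c).Finite) {s : ℝ} (hs : ∀ t < s, c t = 0) :
    Tendsto (fun m => exp (s * m) • ∑ᶠ t, exp (-t * m) • c t) atTop (𝓝 (c s)) := by
  classical
  set S := insert s hc.toFinset
  have hterm : ∀ t ∈ S,
      Tendsto (fun m => exp ((s - t) * m) • c t) atTop (𝓝 (if t = s then c t else 0)) := by
    intro t _
    rcases lt_trichotomy t s with hts | rfl | hts
    · simp [hs t hts, hts.ne]
    · simp
    · rw [if_neg hts.ne']
      have hexp : Tendsto (fun m => exp ((s - t) * m)) atTop (𝓝 0) :=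
        tendsto_exp_atBot.comp (tendsto_id.const_mul_atTop_of_neg (by linarith))
      simpa using hexp.smul_const (c t)
  have hsum := tendsto_finsetSum S hterm
  rw [Finset.sum_ite_eq', if_pos (Finset.mem_insert_self _ _)] at hsum
  refine hsum.congr fun m => ?_
  have hsupp : Function.support (fun t => exp (-t * m) • c t) ⊆ S := fun t ht =>
    Finset.mem_insert_of_mem (hc.mem_toFinset.2 (Function.support_smul_subset_right _ _ ht))
  rw [finsum_eq_sum_of_support_subset _ hsupp, Finset.smul_sum]
  refine Finset.sum_congr rfl fun t _ => ?_
  rw [smul_smul, ← exp_add]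
  ring_nf

theorem log_le_arsinh {x : ℝ} (hx : 0 < x) : log x ≤ arsinh x :=
  log_le_log hx (by linarith [sqrt_nonneg (1 + x ^ 2)])

theorem arsinh_le_log_add_log_three {x : ℝ} (hx : 1 ≤ x) : arsinh x ≤ log x + log 3 := by
  rw [← log_mul (by linarith) (by norm_num)]
  refine log_le_log (by positivity) ?_
  have : √(1 + x ^ 2) ≤ 2 * x := sqrt_le_iff.2 ⟨by linarith, by nlinarith⟩
  linarith

theorem tendsto_arsinh_mul_exp_div {α : Type*} {l : Filter α} {u m : α → ℝ} {B c : ℝ}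
    (hm : Tendsto m l atTop) (hu : Tendsto u l (𝓝 B)) (hB : 0 < B) (hc : 0 < c) :
    Tendsto (fun a => arsinh (u a * exp (c * m a)) / m a) l (𝓝 c) := by
  have hu_pos : ∀ᶠ a in l, 0 < u a := hu.eventually (lt_mem_nhds hB)
  have hm_pos : ∀ᶠ a in l, 0 < m a := hm.eventually_gt_atTop 0
  have hlog : Tendsto (fun a => log (u a * exp (c * m a)) / m a) l (𝓝 c) := by
    have h := ((hu.log hB.ne').div_atTop hm).add_const c
    rw [zero_add] at h
    refine h.congr' ?_
    filter_upwards [hu_pos, hm_pos] with a hua hma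
    rw [log_mul hua.ne' (exp_pos _).ne', log_exp]
    field_simp
  have hlarge : ∀ᶠ a in l, 1 ≤ u a * exp (c * m a) := by
    filter_upwards [hlog.eventually (lt_mem_nhds hc), hu_pos, hm_pos] with a hpos hua hma
    exact ((log_pos_iff (by positivity)).1 ((div_pos_iff_of_pos_right hma).1 hpos)).le
  have hupper : Tendsto (fun a => log (u a * exp (c * m a)) / m a + log 3 / m a) l (𝓝 c) := by
    simpa using hlog.add (tendsto_const_nhds.div_atTop hm)
  refine tendsto_of_tendsto_of_tendsto_of_le_of_le' hlog hupper ?_ ?_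
  · filter_upwards [hlarge, hm_pos] with a hx hma
    exact div_le_div_of_nonneg_right (log_le_arsinh (by linarith)) hma.le
  · filter_upwards [hlarge, hm_pos] with a hx hma
    rw [← add_div]
    exact div_le_div_of_nonneg_right (arsinh_le_log_add_log_three hx) hma.le

namespace Dp

theorem ext {f g : Dp} (hρ : f.ρ = g.ρ) (h : f.toFun = g.toFun) : f = g := by
  cases f; cases g; congr

theorem toFun_eq_zero_of_neg (f : Dp) {t : ℝ} (ht : t < 0) : f.toFun t = 0 :=
  f.supp_subset t fun h => (not_le.2 ht) h.1

section Segregation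

variable {f₁ f₂ : Dp}

theorem segD_set_nonempty :
    {t | t ≤ min f₁.ρ f₂.ρ ∧ ∀ t' ∈ Ico (0:ℝ) t, f₁.toFun t' = f₂.toFun t'}.Nonempty :=
  ⟨0, le_min f₁.ρ_nonneg f₂.ρ_nonneg, fun _ h => (h.1.not_gt h.2).elim⟩

theorem le_segD {t : ℝ} (ht : t ≤ min f₁.ρ f₂.ρ)
    (hagree : ∀ t' ∈ Ico 0 t, f₁.toFun t' = f₂.toFun t') : t ≤ segD f₁ f₂ :=
  le_csSup ⟨min f₁.ρ f₂.ρ, fun _ h => h.1⟩ ⟨ht, hagree⟩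

theorem segD_nonneg : 0 ≤ segD f₁ f₂ :=
  le_segD (le_min f₁.ρ_nonneg f₂.ρ_nonneg) fun _ h => (h.1.not_gt h.2).elim

theorem segD_le_min : segD f₁ f₂ ≤ min f₁.ρ f₂.ρ :=
  csSup_le segD_set_nonempty fun _ h => h.1

theorem segD_le_left : segD f₁ f₂ ≤ f₁.ρ := segD_le_min.trans (min_le_left _ _)

theorem segD_le_right : segD f₁ f₂ ≤ f₂.ρ := segD_le_min.trans (min_le_right _ _)

theorem toFun_eq_of_lt_segD {t : ℝ} (ht : t < segD f₁ f₂) : f₁.toFun t = f₂.toFun t := by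
  rcases lt_or_ge t 0 with hneg | hnonneg
  · rw [toFun_eq_zero_of_neg _ hneg, toFun_eq_zero_of_neg _ hneg]
  · obtain ⟨t', ⟨-, hagree⟩, htt'⟩ := exists_lt_of_lt_csSup segD_set_nonempty ht
    exact hagree t ⟨hnonneg, htt'⟩

theorem segD_eq_of_agree {s : ℝ} (hs : s ≤ min f₁.ρ f₂.ρ)
    (hagree : ∀ t ∈ Ico 0 s, f₁.toFun t = f₂.toFun t)
    (hstop : s = min f₁.ρ f₂.ρ ∨ f₁.toFun s ≠ f₂.toFun s) : segD f₁ f₂ = s := by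
  refine le_antisymm ?_ (le_segD hs hagree)
  rcases hstop with hmin | hne
  · exact hmin ▸ segD_le_min
  · by_contra! hlt
    exact hne (toFun_eq_of_lt_segD hlt)

/-- Two elements of `D` differ only at finitely many points, so if they agreed at the segregation
moment they would agree on a slightly longer interval. -/
theorem toFun_ne_at_segD (h : segD f₁ f₂ < min f₁.ρ f₂.ρ) :
    f₁.toFun (segD f₁ f₂) ≠ f₂.toFun (segD f₁ f₂) := by
  set s := segD f₁ f₂
  intro heq
  have hfin : {t | f₁.toFun t ≠ f₂.toFun t}.Finite :=
    (f₁.finite_supp.union f₂.finite_supp).subset fun t ht => by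
      by_contra h; simp_all
  obtain ⟨ε, hε, hball⟩ := Metric.isOpen_iff.1 hfin.isClosed.isOpen_compl s (by simpa using heq)
  have hle : min (s + ε) (min f₁.ρ f₂.ρ) ≤ s := by
    refine le_segD (min_le_right _ _) fun t ht => ?_
    rcases lt_or_ge t s with hts | hst
    · exact toFun_eq_of_lt_segD hts
    · have : t ∈ Metric.ball s ε := by
        rw [Real.ball_eq_Ioo]
        exact ⟨by linarith, ht.2.trans_le (min_le_left _ _)⟩
      simpa using hball this
  exact (lt_min (lt_add_of_pos_right s hε) h).not_ge hle

theorem segD_comm : segD f₁ f₂ = segD f₂ f₁ := by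
  simp only [segD, min_comm f₁.ρ, eq_comm]

theorem segD_self (f : Dp) : segD f f = f.ρ := by
  simpa using segD_eq_of_agree (f₁ := f) (f₂ := f) (min_self _).ge (fun _ _ => rfl)
    (Or.inl (min_self _).symm)

theorem dD_eq : dD f₁ f₂ = f₁.ρ + f₂.ρ - 2 * segD f₁ f₂ := by
  unfold dD; ring

theorem dD_comm : dD f₁ f₂ = dD f₂ f₁ := by
  rw [dD_eq, dD_eq, segD_comm, add_comm]

theorem dD_self (f : Dp) : dD f f = 0 := by
  rw [dD_eq, segD_self]; ring

theorem dD_nonneg : 0 ≤ dD f₁ f₂ := by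
  have hle₁ : segD f₁ f₂ ≤ f₁.ρ := segD_le_left
  have hle₂ : segD f₁ f₂ ≤ f₂.ρ := segD_le_right
  rw [dD_eq]
  linarith

theorem eq_of_dD_eq_zero (h : dD f₁ f₂ = 0) : f₁ = f₂ := by
  have hle₁ : segD f₁ f₂ ≤ f₁.ρ := segD_le_left
  have hle₂ : segD f₁ f₂ ≤ f₂.ρ := segD_le_right
  rw [dD_eq] at h
  have h₁ : f₁.ρ = segD f₁ f₂ := by linarith
  have h₂ : f₂.ρ = segD f₁ f₂ := by linarith
  refine ext (h₁.trans h₂.symm) (funext fun t => ?_)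
  rcases lt_or_ge t (segD f₁ f₂) with hlt | hge
  · exact toFun_eq_of_lt_segD hlt
  · rw [f₁.supp_subset t fun h => (h₁ ▸ h.2).not_ge hge,
      f₂.supp_subset t fun h => (h₂ ▸ h.2).not_ge hge]

end Segregation

/-- The level `r` is clamped to `[0, f.ρ]`. -/
def trunc (f : Dp) (r : ℝ) : Dp where
  ρ := min (max r 0) f.ρ
  toFun t := if t ∈ Ico 0 (min (max r 0) f.ρ) then f.toFun t else 0
  ρ_nonneg := le_min (le_max_right _ _) f.ρ_nonneg
  zero_at_zero := by split_ifs <;> simp [f.zero_at_zero]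
  supp_subset _ ht := if_neg ht
  finite_supp := f.finite_supp.subset fun t ht => by
    by_contra h
    simp_all

section Truncation

variable {f : Dp} {r : ℝ}

theorem trunc_ρ (h₀ : 0 ≤ r) (hr : r ≤ f.ρ) : (f.trunc r).ρ = r := by
  simp [trunc, max_eq_left h₀, min_eq_left hr]

theorem trunc_toFun (h₀ : 0 ≤ r) (hr : r ≤ f.ρ) (t : ℝ) :
    (f.trunc r).toFun t = if t ∈ Ico 0 r then f.toFun t else 0 := by
  simp [trunc, max_eq_left h₀, min_eq_left hr]

theorem trunc_toFun_of_lt (h₀ : 0 ≤ r) (hr : r ≤ f.ρ) {t : ℝ} (ht : t < r) :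
    (f.trunc r).toFun t = f.toFun t := by
  rw [trunc_toFun h₀ hr]
  split_ifs with h
  · rfl
  · rw [toFun_eq_zero_of_neg _ (not_le.1 fun h₀ => h ⟨h₀, ht⟩)]

theorem trunc_self (f : Dp) : f.trunc f.ρ = f := by
  refine ext (trunc_ρ f.ρ_nonneg le_rfl) (funext fun t => ?_)
  rw [trunc_toFun f.ρ_nonneg le_rfl]
  split_ifs with ht
  · rfl
  · exact (f.supp_subset t ht).symm

theorem segD_trunc_trunc {a b : Dp} {r₁ r₂ : ℝ} (h₁ : 0 ≤ r₁) (hr₁ : r₁ ≤ a.ρ) (h₂ : 0 ≤ r₂)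
    (hr₂ : r₂ ≤ b.ρ) : segD (a.trunc r₁) (b.trunc r₂) = min (min r₁ r₂) (segD a b) := by
  apply segD_eq_of_agree
  · rw [trunc_ρ h₁ hr₁, trunc_ρ h₂ hr₂]
    exact min_le_left _ _
  · rintro t ⟨-, ht⟩
    simp only [lt_min_iff] at ht
    rw [trunc_toFun_of_lt h₁ hr₁ ht.1.1, trunc_toFun_of_lt h₂ hr₂ ht.1.2]
    exact toFun_eq_of_lt_segD ht.2
  · rw [trunc_ρ h₁ hr₁, trunc_ρ h₂ hr₂]
    rcases le_or_gt (min r₁ r₂) (segD a b) with hle | hlt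
    · exact Or.inl (min_eq_left hle)
    · right
      rw [min_eq_right hlt.le]
      rw [lt_min_iff] at hlt
      rw [trunc_toFun_of_lt h₁ hr₁ hlt.1, trunc_toFun_of_lt h₂ hr₂ hlt.2]
      exact toFun_ne_at_segD (lt_min (hlt.1.trans_le hr₁) (hlt.2.trans_le hr₂))

theorem dD_trunc_trunc {a b : Dp} {r₁ r₂ : ℝ} (h₁ : 0 ≤ r₁) (hr₁ : r₁ ≤ a.ρ) (h₂ : 0 ≤ r₂)
    (hr₂ : r₂ ≤ b.ρ) :
    dD (a.trunc r₁) (b.trunc r₂) = r₁ + r₂ - 2 * min (min r₁ r₂) (segD a b) := by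
  rw [dD_eq, segD_trunc_trunc h₁ hr₁ h₂ hr₂, trunc_ρ h₁ hr₁, trunc_ρ h₂ hr₂]

theorem dD_trunc_trunc_self {r₁ r₂ : ℝ} (h₁ : 0 ≤ r₁) (hr₁ : r₁ ≤ f.ρ) (h₂ : 0 ≤ r₂)
    (hr₂ : r₂ ≤ f.ρ) : dD (f.trunc r₁) (f.trunc r₂) = |r₁ - r₂| := by
  rw [dD_trunc_trunc h₁ hr₁ h₂ hr₂, segD_self, min_eq_left ((min_le_left _ _).trans hr₁),
    abs_sub_comm, ← max_sub_min_eq_abs]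
  linarith [min_add_max r₁ r₂]

end Truncation

/-- Descend from `a` to the branch point at height `segD a b`, then climb up to `b`. -/
def geodesic (a b : Dp) (x : ℝ) : Dp :=
  if x ≤ a.ρ - segD a b then a.trunc (a.ρ - x) else b.trunc (x - a.ρ + 2 * segD a b)

section Geodesic

variable {a b : Dp}

theorem geodesic_zero : geodesic a b 0 = a := by
  rw [geodesic, if_pos (sub_nonneg.2 segD_le_left), sub_zero, trunc_self]

theorem geodesic_dD : geodesic a b (dD a b) = b := by
  have hs₀ : 0 ≤ segD a b := segD_nonneg
  have hsa : segD a b ≤ a.ρ := segD_le_left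
  have hsb : segD a b ≤ b.ρ := segD_le_right
  rw [geodesic, dD_eq]
  split_ifs with h
  · have hb : b.ρ = segD a b := by linarith
    have h₀ : dD (a.trunc (segD a b)) (b.trunc b.ρ) = 0 := by
      rw [dD_trunc_trunc hs₀ hsa b.ρ_nonneg le_rfl, hb, min_self, min_self]
      ring
    rw [trunc_self] at h₀
    rw [hb, show a.ρ - (a.ρ + segD a b - 2 * segD a b) = segD a b by ring]
    exact eq_of_dD_eq_zero h₀
  · rw [show a.ρ + b.ρ - 2 * segD a b - a.ρ + 2 * segD a b = b.ρ by ring, trunc_self]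

theorem dD_geodesic {x y : ℝ} (hx : x ∈ Icc 0 (dD a b)) (hy : y ∈ Icc 0 (dD a b)) :
    dD (geodesic a b x) (geodesic a b y) = |x - y| := by
  wlog hxy : x ≤ y generalizing x y
  · rw [dD_comm, abs_sub_comm]
    exact this hy hx (le_of_not_ge hxy)
  have hs₀ : 0 ≤ segD a b := segD_nonneg
  have hsa : segD a b ≤ a.ρ := segD_le_left
  have hsb : segD a b ≤ b.ρ := segD_le_right
  rw [dD_eq] at hx hy
  obtain ⟨hx₀, hxd⟩ := hx
  obtain ⟨hy₀, hyd⟩ := hy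
  unfold geodesic
  split_ifs with hxa hya hya
  · rw [dD_trunc_trunc_self (by linarith) (by linarith) (by linarith) (by linarith),
      abs_sub_comm]
    congr 1; ring
  · rw [dD_trunc_trunc (by linarith) (by linarith) (by linarith) (by linarith),
      min_eq_right (le_min (by linarith) (by linarith)), abs_of_nonpos (by linarith)]
    ring
  · exact absurd (hxy.trans hya) hxa
  · rw [dD_trunc_trunc_self (by linarith) (by linarith) (by linarith) (by linarith)]
    congr 1; ring

end Geodesic

/-- The marker `i` at `t = ρ` makes `point f m` below equal to `∑ f(t) e^{-tm} + i e^{-ρm}`. -/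
def coeff (f : Dp) (t : ℝ) : ℂ := f.toFun t + if t = f.ρ then Complex.I else 0

theorem finite_support_coeff (f : Dp) : (Function.support f.coeff).Finite :=
  (f.finite_supp.union (finite_singleton f.ρ)).subset fun t ht => by
    by_contra h
    simp_all [coeff]

theorem hasFiniteSupport_exp_smul_coeff (f : Dp) (m : ℝ) :
    Function.HasFiniteSupport fun t => exp (-t * m) • f.coeff t :=
  f.finite_support_coeff.subset (Function.support_smul_subset_right (fun t => exp (-t * m)) _)

def point (f : Dp) (m : ℝ) : ℂ := ∑ᶠ t, exp (-t * m) • f.coeff t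

theorem point_im (f : Dp) (m : ℝ) : (f.point m).im = exp (-f.ρ * m) := by
  rw [point, ← Complex.coe_imAddGroupHom, map_finsum _ (f.hasFiniteSupport_exp_smul_coeff m),
    finsum_eq_single _ f.ρ]
  · simp [coeff, Complex.smul_im, -Complex.real_smul]
  · intro t ht
    simp [coeff, ht, Complex.smul_im, -Complex.real_smul]

def toUHP (f : Dp) (m : ℝ) : UpperHalfPlane :=
  .mk (f.point m) (by rw [point_im]; exact exp_pos _)

section Asymptotics

variable {f₁ f₂ : Dp}

theorem point_sub_point (m : ℝ) :
    f₁.point m - f₂.point m = ∑ᶠ t, exp (-t * m) • (f₁.coeff - f₂.coeff) t := by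
  rw [point, point, ← finsum_sub_distrib (f₁.hasFiniteSupport_exp_smul_coeff m)
    (f₂.hasFiniteSupport_exp_smul_coeff m)]
  simp only [Pi.sub_apply, smul_sub]

theorem coeff_eq_of_lt_segD {t : ℝ} (ht : t < segD f₁ f₂) : f₁.coeff t = f₂.coeff t := by
  simp only [coeff, toFun_eq_of_lt_segD ht, (ht.trans_le segD_le_left).ne,
    (ht.trans_le segD_le_right).ne, if_false]

theorem coeff_segD_ne (h : dD f₁ f₂ ≠ 0) : f₁.coeff (segD f₁ f₂) ≠ f₂.coeff (segD f₁ f₂) := by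
  intro heq
  have hre := congrArg Complex.re heq
  have him := congrArg Complex.im heq
  by_cases h₁ : segD f₁ f₂ = f₁.ρ <;> by_cases h₂ : segD f₁ f₂ = f₂.ρ
  · exact h (by rw [dD_eq]; linarith)
  · rw [coeff, coeff, if_pos h₁, if_neg h₂] at him
    simp at him
  · rw [coeff, coeff, if_neg h₁, if_pos h₂] at him
    simp at him
  · simp only [coeff, h₁, h₂, if_false, add_zero, Complex.ofReal_re] at hre
    exact toFun_ne_at_segD (lt_min (segD_le_left.lt_of_ne h₁) (segD_le_right.lt_of_ne h₂)) hre

theorem tendsto_exp_mul_norm_point_sub :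
    Tendsto (fun m => exp (segD f₁ f₂ * m) * ‖f₁.point m - f₂.point m‖) atTop
      (𝓝 ‖f₁.coeff (segD f₁ f₂) - f₂.coeff (segD f₁ f₂)‖) := by
  have hc : (Function.support (f₁.coeff - f₂.coeff)).Finite :=
    (f₁.finite_support_coeff.union f₂.finite_support_coeff).subset (Function.support_sub _ _)
  refine (tendsto_exp_mul_smul_finsum hc
    fun t ht => sub_eq_zero.2 (coeff_eq_of_lt_segD ht)).norm.congr fun m => ?_
  rw [point_sub_point, norm_smul, norm_of_nonneg (exp_pos _).le]

theorem dist_toUHP (m : ℝ) :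
    dist (f₁.toUHP m) (f₂.toUHP m) =
      2 * arsinh (exp (segD f₁ f₂ * m) * ‖f₁.point m - f₂.point m‖ / 2 *
        exp (dD f₁ f₂ / 2 * m)) := by
  have hsqrt : √((f₁.toUHP m).im * (f₂.toUHP m).im) = exp (-(f₁.ρ + f₂.ρ) / 2 * m) := by
    rw [toUHP, toUHP, UpperHalfPlane.mk_im, UpperHalfPlane.mk_im, point_im, point_im, ← exp_add,
      ← exp_half]
    ring_nf
  have hexp :
      exp (segD f₁ f₂ * m) * exp (dD f₁ f₂ / 2 * m) * exp (-(f₁.ρ + f₂.ρ) / 2 * m) = 1 := by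
    rw [← exp_add, ← exp_add, dD_eq, ← exp_zero]
    ring_nf
  rw [UpperHalfPlane.dist_eq, hsqrt, toUHP, toUHP, UpperHalfPlane.coe_mk, UpperHalfPlane.coe_mk,
    dist_eq_norm]
  congr 2
  rw [div_eq_iff (by positivity)]
  linear_combination (-‖f₁.point m - f₂.point m‖) * hexp

theorem tendsto_dist_toUHP_div (f₁ f₂ : Dp) :
    Tendsto (fun m => dist (f₁.toUHP m) (f₂.toUHP m) / m) atTop (𝓝 (dD f₁ f₂)) := by
  rcases (dD_nonneg (f₁ := f₁) (f₂ := f₂)).eq_or_lt with h | h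
  · obtain rfl := eq_of_dD_eq_zero h.symm
    simp [dD_self]
  · have hB : 0 < ‖f₁.coeff (segD f₁ f₂) - f₂.coeff (segD f₁ f₂)‖ / 2 :=
      half_pos (norm_pos_iff.2 (sub_ne_zero.2 (coeff_segD_ne h.ne')))
    have hlim := (tendsto_arsinh_mul_exp_div tendsto_id
      (tendsto_exp_mul_norm_point_sub.div_const 2) hB (half_pos h)).const_mul 2
    rw [mul_div_cancel₀ _ two_ne_zero] at hlim
    refine hlim.congr fun m => ?_
    rw [dist_toUHP]
    simp only [id, mul_div_assoc]

end Asymptotics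

end Dp

/-- `D` is an asymptotic subcone of the hyperbolic plane (here
the upper half-plane with its hyperbolic metric): it is geodesic, and every
finite subset of `D` can be isometrically embedded at infinity. -/
theorem Dp_asymptotic_subcone :
    (∀ a b : Dp, ∃ g : ℝ → Dp, g 0 = a ∧ g (dD a b) = b ∧
      ∀ x ∈ Set.Icc 0 (dD a b), ∀ y ∈ Set.Icc 0 (dD a b), dD (g x) (g y) = |x - y|) ∧
    (∀ (n : ℕ) (f : Fin n → Dp),
      ∃ ε : ℕ → ℝ, (∀ i, 0 < ε i) ∧ Tendsto ε atTop (nhds 0) ∧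
      ∃ x : Fin n → ℕ → UpperHalfPlane,
        ∀ k1 k2 : Fin n,
          Tendsto (fun i => ε i * dist (x k1 i) (x k2 i)) atTop
            (nhds (dD (f k1) (f k2)))) := by
  refine ⟨fun a b => ⟨Dp.geodesic a b, Dp.geodesic_zero, Dp.geodesic_dD,
    fun x hx y hy => Dp.dD_geodesic hx hy⟩, fun n f => ?_⟩
  have hscale : Tendsto (fun i : ℕ => (i : ℝ) + 1) atTop atTop :=
    tendsto_atTop_add_const_right _ 1 tendsto_natCast_atTop_atTop
  refine ⟨fun i => ((i : ℝ) + 1)⁻¹, fun i => by positivity, tendsto_inv_atTop_zero.comp hscale,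
    fun k i => (f k).toUHP (i + 1), fun k₁ k₂ => ?_⟩
  simpa only [inv_mul_eq_div, Function.comp_def] using
    (Dp.tendsto_dist_toUHP_div (f k₁) (f k₂)).comp hscale
end
end

section
/- The space S is not complete: the sequence f_k(t) = sin(1/(1−t)) restricted to [0, 1−2^{−k}] is Cauchy in (S, d_S) but has no limit in S. -/
open Set Filter

noncomputable section

/-- The space `S`: continuous real functions on `[0, ρ]` with `f 0 = 0`.
The function is recorded as a map on all of `ℝ` which is constant in the
clamped variable, so that elements are determined by their values on `[0, ρ]`. -/
structure Sp where
  ρ : ℝ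
  toFun : ℝ → ℝ
  ρ_nonneg : 0 ≤ ρ
  contOn : ContinuousOn toFun (Set.Icc 0 ρ)
  zero_at_zero : toFun 0 = 0
  eq_clamp : ∀ t, toFun t = toFun (max 0 (min t ρ))

/-- The moment of segregation of two elements of `S`. -/
noncomputable def seg (f1 f2 : Sp) : ℝ :=
  sSup {t | t ≤ min f1.ρ f2.ρ ∧ ∀ t' ∈ Set.Ico (0:ℝ) t, f1.toFun t' = f2.toFun t'}

/-- The metric on `S`: `d_S(f1, f2) = (ρ1 - s) + (ρ2 - s)`. -/
noncomputable def dS (f1 f2 : Sp) : ℝ := (f1.ρ - seg f1 f2) + (f2.ρ - seg f1 f2)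

/-! Any two `f_k` agree on their common interval, so `d_S(f_m, f_n) = |ρ_m - ρ_n|`, and the
sequence is Cauchy because `ρ_k → 1`. If `f_k → f`, the segregation moments `seg (f_k) f` tend
to `1`, so `ρ_f ≥ 1` and `f` agrees with `t ↦ sin (1 / (1 - t)) - sin 1` on `[0, 1)`. Continuity
of `f` at `1` would then give `sin` a limit at infinity, which periodicity rules out. -/

open Topology

theorem Function.Periodic.eq_of_tendsto_atTop {α β : Type*} [Field α] [LinearOrder α]
    [IsStrictOrderedRing α] [Archimedean α] [TopologicalSpace β] [T2Space β] {f : α → β}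
    {c : α} {L : β} (hf : f.Periodic c) (hc : 0 < c) (h : Tendsto f atTop (𝓝 L)) (x : α) :
    f x = L := by
  have hseq : Tendsto (fun n : ℕ => x + n * c) atTop atTop :=
    tendsto_atTop_add_const_left _ x (tendsto_natCast_atTop_atTop.atTop_mul_const hc)
  exact tendsto_nhds_unique tendsto_const_nhds ((h.comp hseq).congr fun n => hf.nat_mul n x)

theorem Real.not_tendsto_sin_atTop (L : ℝ) : ¬ Tendsto Real.sin atTop (𝓝 L) := fun h => by
  have hmax := Real.sin_periodic.eq_of_tendsto_atTop Real.two_pi_pos h (Real.pi / 2)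
  have hmin := Real.sin_periodic.eq_of_tendsto_atTop Real.two_pi_pos h (-(Real.pi / 2))
  rw [Real.sin_neg, Real.sin_pi_div_two] at hmin
  rw [Real.sin_pi_div_two] at hmax
  linarith

theorem tendsto_one_sub_inv_atTop_nhdsLT :
    Tendsto (fun x : ℝ => 1 - x⁻¹) atTop (𝓝[<] 1) := by
  refine tendsto_nhdsWithin_iff.2 ⟨?_, ?_⟩
  · simpa using (tendsto_const_nhds (x := (1 : ℝ))).sub tendsto_inv_atTop_zero
  · filter_upwards [eventually_gt_atTop 0] with x hx
    simpa using hx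

theorem not_tendsto_sin_one_div_one_sub (L : ℝ) :
    ¬ Tendsto (fun t => Real.sin (1 / (1 - t))) (𝓝[<] 1) (𝓝 L) := fun h => by
  refine Real.not_tendsto_sin_atTop L ((h.comp tendsto_one_sub_inv_atTop_nhdsLT).congr fun x => ?_)
  simp

theorem seg_set_nonempty (f g : Sp) :
    {t | t ≤ min f.ρ g.ρ ∧ ∀ t' ∈ Ico (0:ℝ) t, f.toFun t' = g.toFun t'}.Nonempty :=
  ⟨0, le_min f.ρ_nonneg g.ρ_nonneg, fun _ ht => absurd ht.2 ht.1.not_gt⟩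

theorem seg_le_min (f g : Sp) : seg f g ≤ min f.ρ g.ρ :=
  csSup_le (seg_set_nonempty f g) fun _ ht => ht.1

theorem eqOn_Ico_seg (f g : Sp) : EqOn f.toFun g.toFun (Ico 0 (seg f g)) := fun t ht => by
  obtain ⟨s, hs, hts⟩ := exists_lt_of_lt_csSup (seg_set_nonempty f g) ht.2
  exact hs.2 t ⟨ht.1, hts⟩

theorem seg_eq_min_of_eqOn {f g : Sp} (h : EqOn f.toFun g.toFun (Ico 0 (min f.ρ g.ρ))) :
    seg f g = min f.ρ g.ρ :=
  (seg_le_min f g).antisymm (le_csSup ⟨min f.ρ g.ρ, fun _ ht => ht.1⟩ ⟨le_rfl, h⟩)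

theorem dS_eq_abs_sub_of_eqOn {f g : Sp} {u : ℝ → ℝ} (hf : EqOn f.toFun u (Icc 0 f.ρ))
    (hg : EqOn g.toFun u (Icc 0 g.ρ)) : dS f g = |f.ρ - g.ρ| := by
  have hseg : seg f g = min f.ρ g.ρ := seg_eq_min_of_eqOn fun t ht =>
    (hf ⟨ht.1, ht.2.le.trans (min_le_left _ _)⟩).trans
      (hg ⟨ht.1, ht.2.le.trans (min_le_right _ _)⟩).symm
  rw [dS, hseg]
  rcases le_total f.ρ g.ρ with h | h
  · rw [min_eq_left h, abs_of_nonpos (sub_nonpos.2 h)]; ring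
  · rw [min_eq_right h, abs_of_nonneg (sub_nonneg.2 h)]; ring

section Limit

variable {fk : ℕ → Sp} {f : Sp} {r : ℝ}

theorem tendsto_seg_of_tendsto_dS (hρ : Tendsto (fun k => (fk k).ρ) atTop (𝓝 r))
    (hf : Tendsto (fun k => dS (fk k) f) atTop (𝓝 0)) :
    Tendsto (fun k => seg (fk k) f) atTop (𝓝 r) := by
  -- squeeze: `ρₖ - dS (fk k) f ≤ seg (fk k) f ≤ ρₖ`, the left one because `seg ≤ f.ρ`
  refine tendsto_of_tendsto_of_tendsto_of_le_of_le (by simpa using hρ.sub hf) hρ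
    (fun k => ?_) (fun k => (seg_le_min _ _).trans (min_le_left _ _))
  have := (seg_le_min (fk k) f).trans (min_le_right _ _)
  simp only [dS]
  linarith

theorem le_ρ_of_tendsto_dS (hρ : Tendsto (fun k => (fk k).ρ) atTop (𝓝 r))
    (hf : Tendsto (fun k => dS (fk k) f) atTop (𝓝 0)) : r ≤ f.ρ :=
  le_of_tendsto (tendsto_seg_of_tendsto_dS hρ hf)
    (Eventually.of_forall fun _ => (seg_le_min _ _).trans (min_le_right _ _))

theorem eqOn_Ico_of_tendsto_dS {u : ℝ → ℝ} (hu : ∀ k, EqOn (fk k).toFun u (Icc 0 (fk k).ρ))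
    (hρ : Tendsto (fun k => (fk k).ρ) atTop (𝓝 r))
    (hf : Tendsto (fun k => dS (fk k) f) atTop (𝓝 0)) : EqOn f.toFun u (Ico 0 r) := by
  intro t ht
  obtain ⟨k, hk⟩ := ((tendsto_seg_of_tendsto_dS hρ hf).eventually (eventually_gt_nhds ht.2)).exists
  have hseg := (seg_le_min (fk k) f).trans (min_le_left _ _)
  rw [← eqOn_Ico_seg (fk k) f ⟨ht.1, hk⟩]
  exact hu k ⟨ht.1, hk.le.trans hseg⟩

end Limit

theorem Sp.tendsto_nhdsLT (f : Sp) {r : ℝ} (hr : 0 < r) (hrf : r ≤ f.ρ) :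
    Tendsto f.toFun (𝓝[<] r) (𝓝 (f.toFun r)) :=
  (f.contOn r ⟨hr.le, hrf⟩).tendsto.mono_left <| nhdsWithin_le_of_mem <|
    mem_of_superset (Ioo_mem_nhdsLT hr) fun _ ht => ⟨ht.1.le, ht.2.le.trans hrf⟩

/-- `S` is not complete: the sequence of functions
`f_k(t) = sin(1/(1-t)) - sin 1` on `[0, 1 - 2^{-k}]` is Cauchy for `d_S`
but has no limit in `S`. -/
theorem Sp_not_complete (fk : ℕ → Sp)
    (hρ : ∀ k, (fk k).ρ = 1 - (1 / 2 : ℝ) ^ k)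
    (hval : ∀ k, ∀ t ∈ Set.Icc (0:ℝ) ((fk k).ρ),
      (fk k).toFun t = Real.sin (1 / (1 - t)) - Real.sin 1) :
    (∀ δ : ℝ, 0 < δ → ∃ N : ℕ, ∀ m ≥ N, ∀ n ≥ N, dS (fk m) (fk n) < δ) ∧
    ¬ ∃ f : Sp, Tendsto (fun k => dS (fk k) f) atTop (nhds 0) := by
  have hρlim : Tendsto (fun k => (fk k).ρ) atTop (𝓝 1) := by
    simp_rw [hρ]
    simpa using tendsto_const_nhds.sub
      (tendsto_pow_atTop_nhds_zero_of_lt_one (by norm_num : (0 : ℝ) ≤ 1 / 2) (by norm_num))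
  constructor
  · intro δ hδ
    obtain ⟨N, hN⟩ := Metric.cauchySeq_iff.1 hρlim.cauchySeq δ hδ
    refine ⟨N, fun m hm n hn => ?_⟩
    rw [dS_eq_abs_sub_of_eqOn (hval m) (hval n), ← Real.dist_eq]
    exact hN m hm n hn
  · rintro ⟨f, hf⟩
    have hf1 := f.tendsto_nhdsLT one_pos (le_ρ_of_tendsto_dS hρlim hf)
    have hfu : f.toFun =ᶠ[𝓝[<] 1] fun t => Real.sin (1 / (1 - t)) - Real.sin 1 :=
      mem_of_superset (Ioo_mem_nhdsLT one_pos) fun t ht =>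
        eqOn_Ico_of_tendsto_dS hval hρlim hf ⟨ht.1.le, ht.2⟩
    exact not_tendsto_sin_one_div_one_sub _ (by
      simpa using (hf1.congr' hfu).add_const (Real.sin 1))
end
end
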